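/- Let q ≥ 2, let g = (g₁,…,g_q) be a standard Gaussian vector in ℝ^q, and let λ₁,…,λ_q > 0. If λ_i ≥ λ_j for indices i, j, then E[ λ_i g_i² / (λ₁g₁² + ⋯ + λ_q g_q²) ] ≥ E[ λ_j g_j² / (λ₁g₁² + ⋯ + λ_q g_q²) ]. Consequently the map j ↦ E[ λ_j g_j² / (λ₁g₁² + ⋯ + λ_q g_q²) ] is nonincreasing whenever λ₁ ≥ λ₂ ≥ ⋯ ≥ λ_q. -/

import Mathlib

/-!
Write `F_k(x) = λ_k x_k² / ∑_l λ_l x_l²`. The standard Gaussian law is invariant under the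
transposition `σ` of the coordinates `i` and `j`, so `E[F_k] = E[F_k ∘ σ]` for every `k`, and it
suffices to show `F_j + F_j ∘ σ ≤ F_i + F_i ∘ σ` pointwise. With `a = x_i²`, `b = x_j²` and `T`
the contribution of the other coordinates, this reads
`(λ_i a - λ_j b)/(λ_i a + λ_j b + T) + (λ_i b - λ_j a)/(λ_i b + λ_j a + T) ≥ 0`, whose numerator
after clearing denominators is `2 (λ_i² - λ_j²) a b + (λ_i - λ_j)(a + b) T ≥ 0`.
-/

open MeasureTheory ProbabilityTheory

/-- Law of a standard Gaussian vector in `ℝ^d`: i.i.d. `N(0,1)` coordinates. -/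
noncomputable def stdGaussian (d : ℕ) : Measure (Fin d → ℝ) :=
  Measure.pi fun _ => gaussianReal 0 1

instance isProbabilityMeasure_stdGaussian (d : ℕ) :
    IsProbabilityMeasure (_root_.stdGaussian d) := by
  unfold _root_.stdGaussian; infer_instance

lemma measurePreserving_comp_perm_pi {ι β : Type*} [Fintype ι] [MeasurableSpace β]
    (m : Measure β) [SigmaFinite m] (e : Equiv.Perm ι) :
    MeasurePreserving (fun x : ι → β => x ∘ e) (Measure.pi fun _ => m)
      (Measure.pi fun _ => m) := by
  convert measurePreserving_arrowCongr' (fun _ => m) (fun _ => m) e.symm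
    (MeasurableEquiv.refl β) (fun _ => MeasurePreserving.id m)
  ext x
  simp [MeasurableEquiv.arrowCongr', Equiv.arrowCongr']

theorem div_add_div_swap_le {li lj a b T : ℝ} (hlj : 0 ≤ lj) (hij : lj ≤ li)
    (ha : 0 ≤ a) (hb : 0 ≤ b) (hT : 0 ≤ T) :
    lj * b / (li * a + lj * b + T) + lj * a / (li * b + lj * a + T) ≤
      li * a / (li * a + lj * b + T) + li * b / (li * b + lj * a + T) := by
  have hli : 0 ≤ li := hlj.trans hij
  rw [← sub_nonneg, add_sub_add_comm, ← sub_div, ← sub_div]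
  set u := li * a + lj * b + T
  set v := li * b + lj * a + T
  rcases (show 0 ≤ u by positivity).eq_or_lt with hu | hu
  · have : lj * a ≤ li * a := mul_le_mul_of_nonneg_right hij ha
    rw [← hu, div_zero, zero_add]
    exact div_nonneg (by nlinarith) (by positivity)
  rcases (show 0 ≤ v by positivity).eq_or_lt with hv | hv
  · have : lj * b ≤ li * b := mul_le_mul_of_nonneg_right hij hb
    rw [← hv, div_zero, add_zero]
    exact div_nonneg (by nlinarith) hu.le
  rw [div_add_div _ _ hu.ne' hv.ne']
  refine div_nonneg ?_ (by positivity)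
  have key : (li * a - lj * b) * v + u * (li * b - lj * a)
      = 2 * (li + lj) * (li - lj) * a * b + (li - lj) * (a + b) * T := by ring
  have : 0 ≤ li - lj := sub_nonneg.2 hij
  rw [key]
  positivity

noncomputable def weightedShare {ι : Type*} [Fintype ι] (lam : ι → ℝ) (k : ι) (x : ι → ℝ) : ℝ :=
  lam k * x k ^ 2 / ∑ l, lam l * x l ^ 2

section WeightedShare

variable {ι : Type*} [Fintype ι] {lam : ι → ℝ}

lemma measurable_weightedShare (k : ι) : Measurable (weightedShare lam k) := by
  unfold weightedShare; fun_prop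

lemma weightedShare_nonneg (hlam : 0 ≤ lam) (k : ι) (x : ι → ℝ) : 0 ≤ weightedShare lam k x :=
  div_nonneg (mul_nonneg (hlam k) (sq_nonneg _))
    (Finset.sum_nonneg fun l _ => mul_nonneg (hlam l) (sq_nonneg _))

lemma weightedShare_le_one (hlam : 0 ≤ lam) (k : ι) (x : ι → ℝ) : weightedShare lam k x ≤ 1 :=
  div_le_one_of_le₀
    (Finset.single_le_sum (fun l _ => mul_nonneg (hlam l) (sq_nonneg (x l))) (Finset.mem_univ k))
    (Finset.sum_nonneg fun l _ => mul_nonneg (hlam l) (sq_nonneg _))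

lemma integrable_weightedShare {ν : Measure (ι → ℝ)} [IsFiniteMeasure ν] (hlam : 0 ≤ lam)
    (k : ι) : Integrable (weightedShare lam k) ν :=
  (integrable_const (1 : ℝ)).mono' (measurable_weightedShare k).aestronglyMeasurable
    (ae_of_all _ fun x => by
      rw [Real.norm_eq_abs, abs_of_nonneg (weightedShare_nonneg hlam k x)]
      exact weightedShare_le_one hlam k x)

variable [DecidableEq ι]

lemma weightedShare_add_comp_swap_le (hlam : 0 ≤ lam) {i j : ι} (hij : lam j ≤ lam i)
    (x : ι → ℝ) :
    weightedShare lam j x + weightedShare lam j (x ∘ Equiv.swap i j) ≤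
      weightedShare lam i x + weightedShare lam i (x ∘ Equiv.swap i j) := by
  rcases eq_or_ne i j with rfl | hne
  · exact le_rfl
  obtain ⟨T, hT, hsum⟩ : ∃ T, 0 ≤ T ∧
      ∑ l, lam l * x l ^ 2 = lam i * x i ^ 2 + lam j * x j ^ 2 + T := by
    refine ⟨_, ?_, (add_sub_cancel _ _).symm⟩
    have := Finset.sum_le_univ_sum_of_nonneg (s := {i, j})
      (fun l => mul_nonneg (hlam l) (sq_nonneg (x l)))
    rw [Finset.sum_pair hne] at this
    linarith
  have hsum_swap : ∑ l, lam l * (x ∘ Equiv.swap i j) l ^ 2 =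
      lam i * x j ^ 2 + lam j * x i ^ 2 + T := by
    have hdiff : ∑ l, (lam l * (x ∘ Equiv.swap i j) l ^ 2 - lam l * x l ^ 2) =
        (lam i * x j ^ 2 - lam i * x i ^ 2) + (lam j * x i ^ 2 - lam j * x j ^ 2) := by
      rw [Fintype.sum_eq_add i j hne]
      · simp
      · rintro l ⟨hli, hlj⟩
        simp [Equiv.swap_apply_of_ne_of_ne hli hlj]
    rw [Finset.sum_sub_distrib] at hdiff
    linarith
  simp only [weightedShare, hsum, hsum_swap]
  simp only [Function.comp_apply, Equiv.swap_apply_left, Equiv.swap_apply_right]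
  exact div_add_div_swap_le (hlam j) hij (sq_nonneg _) (sq_nonneg _) hT

theorem integral_weightedShare_le_of_swap {ν : Measure (ι → ℝ)} [IsFiniteMeasure ν]
    (hlam : 0 ≤ lam) {i j : ι} (hij : lam j ≤ lam i)
    (hν : MeasurePreserving (fun x => x ∘ Equiv.swap i j) ν ν) :
    ∫ x, weightedShare lam j x ∂ν ≤ ∫ x, weightedShare lam i x ∂ν := by
  have hcomp (k : ι) :
      ∫ x, weightedShare lam k (x ∘ Equiv.swap i j) ∂ν = ∫ x, weightedShare lam k x ∂ν := by
    rw [← integral_map hν.aemeasurable (measurable_weightedShare k).aestronglyMeasurable,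
      hν.map_eq]
  have hint (k : ι) : Integrable (fun x => weightedShare lam k (x ∘ Equiv.swap i j)) ν :=
    hν.integrable_comp_of_integrable (integrable_weightedShare hlam k)
  have hsum : ∫ x, (weightedShare lam j x + weightedShare lam j (x ∘ Equiv.swap i j)) ∂ν ≤
      ∫ x, (weightedShare lam i x + weightedShare lam i (x ∘ Equiv.swap i j)) ∂ν :=
    integral_mono ((integrable_weightedShare hlam j).add (hint j))
      ((integrable_weightedShare hlam i).add (hint i)) (weightedShare_add_comp_swap_le hlam hij)
  rw [integral_add (integrable_weightedShare hlam j) (hint j),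
    integral_add (integrable_weightedShare hlam i) (hint i), hcomp, hcomp] at hsum
  linarith

end WeightedShare

theorem stmt9_general (q : ℕ)
    {Ω : Type*} [MeasurableSpace Ω] (μ : Measure Ω)
    (g : Ω → Fin q → ℝ) (hg : Measure.map g μ = stdGaussian q)
    (lam : Fin q → ℝ) (hlam : ∀ k, 0 < lam k) :
    (∀ i j : Fin q, lam j ≤ lam i →
      ∫ ω, lam j * g ω j ^ 2 / (∑ k, lam k * g ω k ^ 2) ∂μ ≤
        ∫ ω, lam i * g ω i ^ 2 / (∑ k, lam k * g ω k ^ 2) ∂μ) ∧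
    (Antitone lam →
      Antitone fun j => ∫ ω, lam j * g ω j ^ 2 / (∑ k, lam k * g ω k ^ 2) ∂μ) := by
  have hgm : AEMeasurable g μ := .of_map_ne_zero (hg ▸ IsProbabilityMeasure.ne_zero _)
  have hlaw (k : Fin q) : ∫ ω, lam k * g ω k ^ 2 / (∑ l, lam l * g ω l ^ 2) ∂μ =
      ∫ x, weightedShare lam k x ∂stdGaussian q := by
    rw [← hg, integral_map hgm (measurable_weightedShare k).aestronglyMeasurable]
    rfl
  have hmono (i j : Fin q) (hij : lam j ≤ lam i) :
      ∫ ω, lam j * g ω j ^ 2 / (∑ k, lam k * g ω k ^ 2) ∂μ ≤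
        ∫ ω, lam i * g ω i ^ 2 / (∑ k, lam k * g ω k ^ 2) ∂μ := by
    rw [hlaw, hlaw]
    exact integral_weightedShare_le_of_swap (fun k => (hlam k).le) hij
      (measurePreserving_comp_perm_pi _ _)
  exact ⟨hmono, fun hA _ _ hjk => hmono _ _ (hA hjk)⟩

/-- For a standard Gaussian vector `g` in `ℝ^q` (`q ≥ 2`) and positive weights `λ`,
if `λ i ≥ λ j` then `E[λ_i g_i²/∑ λ_k g_k²] ≥ E[λ_j g_j²/∑ λ_k g_k²]`; consequently
`j ↦ E[λ_j g_j²/∑ λ_k g_k²]` is nonincreasing whenever `λ` is nonincreasing. -/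
theorem stmt9 (q : ℕ) (hq : 2 ≤ q)
    {Ω : Type*} [MeasurableSpace Ω] (μ : Measure Ω) [IsProbabilityMeasure μ]
    (g : Ω → Fin q → ℝ) (hg : Measure.map g μ = stdGaussian q)
    (lam : Fin q → ℝ) (hlam : ∀ k, 0 < lam k) :
    (∀ i j : Fin q, lam j ≤ lam i →
      ∫ ω, lam j * g ω j ^ 2 / (∑ k, lam k * g ω k ^ 2) ∂μ ≤
        ∫ ω, lam i * g ω i ^ 2 / (∑ k, lam k * g ω k ^ 2) ∂μ) ∧
    (Antitone lam →
      Antitone fun j => ∫ ω, lam j * g ω j ^ 2 / (∑ k, lam k * g ω k ^ 2) ∂μ) :=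
  stmt9_general q μ g hg lam hlam
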